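/- Let q ≥ 0 be an integer and let r_0, …, r_q ∈ [0,1] and ω_0, …, ω_q ∈ ℝ be nodes and weights such that ∫_0^1 p(x) dx = ∑_{l=0}^q ω_l p(r_l) for every univariate polynomial p of degree ≤ 2q+1. Then for every bivariate polynomial g of total degree ≤ 2q, ∫_{B²} g(x, y) dx dy = ∑_{l=0}^{q} ∑_{m=0}^{2q} g( r_l cos(2πm/(2q+1)), r_l sin(2πm/(2q+1)) ) · ω_l · (2π/(2q+1)) · r_l. -/

import Mathlib

/-!
In polar coordinates the integral of `x ^ a * y ^ b` over the disk factors as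
`(∫₀¹ ρ ^ (a + b + 1) dρ) * (∫_{-π}^{π} cos θ ^ a * sin θ ^ b dθ)`. The radial factor is
integrated exactly by the given rule, since `a + b + 1 ≤ 2q + 1`. The angular factor is a
trigonometric polynomial of degree `a + b ≤ 2q`, i.e. a combination of `exp (k θ i)` with
`|k| < 2q + 1`, and the `(2q + 1)`-point trapezoidal rule is exact on each of these: for `k ≠ 0`
both the integral and the sum over the `(2q + 1)`-st roots of unity vanish. Linearity extends the
result from monomials to all polynomials of total degree `≤ 2q`.
-/

open MeasureTheory Real

noncomputable def fourierExp (k : ℤ) (θ : ℝ) : ℂ := Complex.exp (k * θ * Complex.I)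

theorem fourierExp_add (j k : ℤ) : fourierExp (j + k) = fourierExp j * fourierExp k := by
  ext θ
  simp only [fourierExp, Pi.mul_apply, ← Complex.exp_add]
  push_cast
  ring_nf

@[fun_prop]
theorem continuous_fourierExp (k : ℤ) : Continuous (fourierExp k) := by
  unfold fourierExp
  fun_prop

theorem integral_fourierExp_of_ne_zero {k : ℤ} (hk : k ≠ 0) :
    ∫ θ in -π..π, fourierExp k θ = 0 := by
  have hc : (k * Complex.I : ℂ) ≠ 0 := mul_ne_zero (by exact_mod_cast hk) Complex.I_ne_zero
  have hperiodic : Complex.exp (k * Complex.I * π) = Complex.exp (k * Complex.I * ↑(-π)) := by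
    rw [Complex.exp_eq_exp_iff_exists_int]
    exact ⟨k, by push_cast; ring⟩
  simp only [fourierExp, mul_right_comm _ _ Complex.I]
  rw [integral_exp_mul_complex hc, hperiodic, sub_self, zero_div]

theorem sum_fourierExp_of_not_dvd {N : ℕ} {k : ℤ} (hk : ¬(N : ℤ) ∣ k) :
    ∑ m : Fin N, fourierExp k (2 * π * m / N) = 0 := by
  rcases N.eq_zero_or_pos with rfl | hN
  · simp
  have hprim := Complex.isPrimitiveRoot_exp N hN.ne'
  set ζ := Complex.exp (2 * π * Complex.I / N) ^ k
  have hterm (m : ℕ) : fourierExp k (2 * π * m / N) = ζ ^ m := by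
    rw [← zpow_natCast, ← zpow_mul, ← Complex.exp_int_mul, fourierExp]
    congr 1
    push_cast
    ring
  have hζ1 : ζ ≠ 1 := mt (hprim.zpow_eq_one_iff_dvd k).mp hk
  have hζN : ζ ^ N = 1 := by
    rw [← zpow_natCast, ← zpow_mul, mul_comm k, zpow_mul, zpow_natCast, hprim.pow_eq_one,
      one_zpow]
  simp only [hterm, Fin.sum_univ_eq_sum_range (ζ ^ ·), geom_sum_eq hζ1, hζN, sub_self, zero_div]

theorem integral_fourierExp_eq_trapezoid {N : ℕ} {k : ℤ} (hk : |k| < N) :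
    ∫ θ in -π..π, fourierExp k θ
      = (2 * π / N : ℝ) * ∑ m : Fin N, fourierExp k (2 * π * m / N) := by
  rcases eq_or_ne k 0 with rfl | hk0
  · have hN : (N : ℂ) ≠ 0 := by rw [abs_zero] at hk; exact_mod_cast hk.ne'
    simp only [fourierExp, Int.cast_zero, zero_mul, Complex.exp_zero,
      intervalIntegral.integral_const, Finset.sum_const, Finset.card_univ, Fintype.card_fin,
      nsmul_eq_mul, Complex.real_smul]
    push_cast
    field_simp
    ring
  · have hdvd : ¬(N : ℤ) ∣ k := fun h => hk0 (Int.eq_zero_of_abs_lt_dvd h hk)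
    rw [integral_fourierExp_of_ne_zero hk0, sum_fourierExp_of_not_dvd hdvd, mul_zero]

noncomputable def trigPoly (n : ℕ) : Submodule ℂ (ℝ → ℂ) :=
  Submodule.span ℂ (fourierExp '' Set.Icc (-n : ℤ) n)

theorem fourierExp_mem_trigPoly {n : ℕ} {k : ℤ} (hk : |k| ≤ n) : fourierExp k ∈ trigPoly n :=
  Submodule.subset_span ⟨k, abs_le.mp hk, rfl⟩

theorem trigPoly_mul_le (m n : ℕ) : trigPoly m * trigPoly n ≤ trigPoly (m + n) := by
  rw [trigPoly, trigPoly, Submodule.span_mul_span]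
  refine Submodule.span_le.mpr ?_
  rintro _ ⟨_, ⟨j, hj, rfl⟩, _, ⟨k, hk, rfl⟩, rfl⟩
  change fourierExp j * fourierExp k ∈ _
  rw [← fourierExp_add]
  refine fourierExp_mem_trigPoly ?_
  rw [Set.mem_Icc, ← abs_le] at hj hk
  push_cast
  exact (abs_add_le j k).trans (add_le_add hj hk)

theorem pow_mem_trigPoly {n : ℕ} {f : ℝ → ℂ} (hf : f ∈ trigPoly n) (a : ℕ) :
    f ^ a ∈ trigPoly (a * n) := by
  induction a with
  | zero =>
    have hone : (1 : ℝ → ℂ) = fourierExp 0 := by ext; simp [fourierExp]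
    rw [pow_zero, hone]
    exact fourierExp_mem_trigPoly (by simp)
  | succ a ih =>
    rw [pow_succ, Nat.succ_mul]
    exact trigPoly_mul_le _ _ (Submodule.mul_mem_mul ih hf)

theorem cos_mem_trigPoly_one : (fun θ : ℝ => (cos θ : ℂ)) ∈ trigPoly 1 := by
  have h : (fun θ : ℝ => (cos θ : ℂ)) = (2⁻¹ : ℂ) • (fourierExp 1 + fourierExp (-1)) := by
    ext θ
    simp only [fourierExp, Complex.ofReal_cos, Complex.cos, Pi.smul_apply, Pi.add_apply,
      smul_eq_mul]
    push_cast
    ring_nf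
  rw [h]
  exact Submodule.smul_mem _ _
    (add_mem (fourierExp_mem_trigPoly (by simp)) (fourierExp_mem_trigPoly (by simp)))

theorem sin_mem_trigPoly_one : (fun θ : ℝ => (sin θ : ℂ)) ∈ trigPoly 1 := by
  have h : (fun θ : ℝ => (sin θ : ℂ)) = (Complex.I / 2) • (fourierExp (-1) - fourierExp 1) := by
    ext θ
    simp only [fourierExp, Complex.ofReal_sin, Complex.sin, Pi.smul_apply, Pi.sub_apply,
      smul_eq_mul]
    push_cast
    ring_nf
  rw [h]
  exact Submodule.smul_mem _ _
    (sub_mem (fourierExp_mem_trigPoly (by simp)) (fourierExp_mem_trigPoly (by simp)))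

theorem integral_eq_trapezoid_of_mem_trigPoly {n N : ℕ} (hn : n < N) {f : ℝ → ℂ}
    (hf : f ∈ trigPoly n) :
    ∫ θ in -π..π, f θ = (2 * π / N : ℝ) * ∑ m : Fin N, f (2 * π * m / N) := by
  -- Continuity is carried along because the interval integral is additive only on integrable
  -- functions.
  suffices Continuous f ∧ ∫ θ in -π..π, f θ = (2 * π / N : ℝ) * ∑ m : Fin N, f (2 * π * m / N)
    from this.2
  induction hf using Submodule.span_induction with
  | mem f hf =>
    obtain ⟨k, hk, rfl⟩ := hf
    refine ⟨continuous_fourierExp k, integral_fourierExp_eq_trapezoid ?_⟩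
    rw [Set.mem_Icc, ← abs_le] at hk
    exact hk.trans_lt (by exact_mod_cast hn)
  | zero => exact ⟨continuous_const, by simp⟩
  | add f g _ _ hf hg =>
    refine ⟨hf.1.add hg.1, ?_⟩
    simp only [Pi.add_apply]
    rw [intervalIntegral.integral_add (hf.1.intervalIntegrable _ _) (hg.1.intervalIntegrable _ _),
      hf.2, hg.2, Finset.sum_add_distrib, mul_add]
  | smul c f _ hf =>
    refine ⟨hf.1.const_smul c, ?_⟩
    simp only [Pi.smul_apply, smul_eq_mul, intervalIntegral.integral_const_mul, hf.2,
      ← Finset.mul_sum]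
    ring

theorem integral_cos_pow_mul_sin_pow_eq_trapezoid {a b N : ℕ} (hab : a + b < N) :
    ∫ θ in -π..π, cos θ ^ a * sin θ ^ b
      = 2 * π / N * ∑ m : Fin N, cos (2 * π * m / N) ^ a * sin (2 * π * m / N) ^ b := by
  have hmem := trigPoly_mul_le _ _ (Submodule.mul_mem_mul
    (pow_mem_trigPoly cos_mem_trigPoly_one a) (pow_mem_trigPoly sin_mem_trigPoly_one b))
  rw [mul_one, mul_one] at hmem
  have h := integral_eq_trapezoid_of_mem_trigPoly hab hmem
  simp only [Pi.mul_apply, Pi.pow_apply] at h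
  apply Complex.ofReal_injective
  rw [← intervalIntegral.integral_ofReal]
  exact_mod_cast h

theorem polarCoord_symm_mem_unitDisk_iff {p : ℝ × ℝ} (hp : 0 ≤ p.1) :
    polarCoord.symm p ∈ {p : ℝ × ℝ | p.1 ^ 2 + p.2 ^ 2 < 1} ↔ p.1 < 1 := by
  have h : (p.1 * cos p.2) ^ 2 + (p.1 * sin p.2) ^ 2 = p.1 ^ 2 := by
    linear_combination p.1 ^ 2 * sin_sq_add_cos_sq p.2
  simp only [polarCoord_symm_apply, Set.mem_ofPred_eq, h, sq_lt_one_iff₀ hp]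

theorem setIntegral_unitDisk_eq_polar {E : Type*} [NormedAddCommGroup E] [NormedSpace ℝ E]
    (f : ℝ × ℝ → E) :
    ∫ p in {p : ℝ × ℝ | p.1 ^ 2 + p.2 ^ 2 < 1}, f p
      = ∫ p in Set.Ioo 0 1 ×ˢ Set.Ioo (-π) π, p.1 • f (polarCoord.symm p) := by
  set D := {p : ℝ × ℝ | p.1 ^ 2 + p.2 ^ 2 < 1}
  have hD : MeasurableSet D := measurableSet_lt (by fun_prop) measurable_const
  have hpolar : polarCoord.target ∩ polarCoord.symm ⁻¹' D = Set.Ioo 0 1 ×ˢ Set.Ioo (-π) π := by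
    ext p
    simp only [polarCoord_target, Set.mem_inter_iff, Set.mem_preimage, Set.mem_prod,
      Set.mem_Ioi, Set.mem_Ioo]
    constructor
    · rintro ⟨⟨hr, hθ⟩, hp⟩
      exact ⟨⟨hr, (polarCoord_symm_mem_unitDisk_iff hr.le).mp hp⟩, hθ⟩
    · rintro ⟨⟨hr, hr1⟩, hθ⟩
      exact ⟨⟨hr, hθ⟩, (polarCoord_symm_mem_unitDisk_iff hr.le).mpr hr1⟩
  rw [← integral_indicator hD, ← integral_comp_polarCoord_symm, ← hpolar,
    ← setIntegral_indicator (hD.preimage continuous_polarCoord_symm.measurable)]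
  congr 1
  ext p
  by_cases hp : polarCoord.symm p ∈ D
  · rw [Set.indicator_of_mem hp, Set.indicator_of_mem (Set.mem_preimage.mpr hp)]
  · rw [Set.indicator_of_notMem hp, Set.indicator_of_notMem (mt Set.mem_preimage.mp hp),
      smul_zero]

theorem setIntegral_unitDisk_monomial (a b : ℕ) :
    ∫ p in {p : ℝ × ℝ | p.1 ^ 2 + p.2 ^ 2 < 1}, p.1 ^ a * p.2 ^ b
      = (∫ x in (0 : ℝ)..1, x ^ (a + b + 1)) * ∫ θ in -π..π, cos θ ^ a * sin θ ^ b := by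
  rw [setIntegral_unitDisk_eq_polar, intervalIntegral.integral_of_le zero_le_one,
    intervalIntegral.integral_of_le (neg_le_self pi_pos.le), integral_Ioc_eq_integral_Ioo,
    integral_Ioc_eq_integral_Ioo, ← setIntegral_prod_mul, Measure.volume_eq_prod]
  congr 1
  ext p
  simp only [polarCoord_symm_apply, smul_eq_mul]
  ring

theorem integrableOn_unitDisk_of_continuous {E : Type*} [NormedAddCommGroup E]
    {f : ℝ × ℝ → E} (hf : Continuous f) :
    IntegrableOn f {p : ℝ × ℝ | p.1 ^ 2 + p.2 ^ 2 < 1} := by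
  refine (hf.continuousOn.integrableOn_compact (isCompact_closedBall 0 1)).mono_set ?_
  intro p hp
  rw [Set.mem_ofPred_eq] at hp
  rw [Metric.mem_closedBall, dist_zero_right, Prod.norm_def, max_le_iff, Real.norm_eq_abs,
    Real.norm_eq_abs, abs_le, abs_le]
  constructor <;> constructor <;> nlinarith

theorem MvPolynomial.eval_fin_two_eq_sum {R : Type*} [CommSemiring R]
    (g : MvPolynomial (Fin 2) R) (x y : R) :
    eval ![x, y] g = ∑ d ∈ g.support, g.coeff d * (x ^ d 0 * y ^ d 1) := by
  simp only [eval_eq', Fin.prod_univ_two, Matrix.cons_val_zero, Matrix.cons_val_one,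
    Matrix.cons_val_fin_one]

theorem setIntegral_unitDisk_eval (g : MvPolynomial (Fin 2) ℝ) :
    ∫ p in {p : ℝ × ℝ | p.1 ^ 2 + p.2 ^ 2 < 1}, MvPolynomial.eval ![p.1, p.2] g
      = ∑ d ∈ g.support,
          g.coeff d * ∫ p in {p : ℝ × ℝ | p.1 ^ 2 + p.2 ^ 2 < 1}, p.1 ^ d 0 * p.2 ^ d 1 := by
  simp only [MvPolynomial.eval_fin_two_eq_sum, ← integral_const_mul]
  exact integral_finsetSum _ fun d _ => integrableOn_unitDisk_of_continuous (by fun_prop)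

theorem setIntegral_unitDisk_monomial_eq_productRule (q : ℕ) (r ω : Fin (q + 1) → ℝ)
    (hquad : ∀ p : Polynomial ℝ, p.natDegree ≤ 2 * q + 1 →
      ∫ x in (0 : ℝ)..1, p.eval x = ∑ l : Fin (q + 1), ω l * p.eval (r l))
    {a b : ℕ} (hab : a + b ≤ 2 * q) :
    ∫ p in {p : ℝ × ℝ | p.1 ^ 2 + p.2 ^ 2 < 1}, p.1 ^ a * p.2 ^ b
      = ∑ l : Fin (q + 1), ∑ m : Fin (2 * q + 1),
          (r l * cos (2 * π * m / (2 * q + 1))) ^ a * (r l * sin (2 * π * m / (2 * q + 1))) ^ b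
            * ω l * (2 * π / (2 * q + 1)) * r l := by
  have hradial := hquad (Polynomial.X ^ (a + b + 1)) (by rw [Polynomial.natDegree_X_pow]; omega)
  have hangular :=
    integral_cos_pow_mul_sin_pow_eq_trapezoid (a := a) (b := b) (N := 2 * q + 1) (by omega)
  simp only [Polynomial.eval_pow, Polynomial.eval_X] at hradial
  push_cast at hangular
  rw [setIntegral_unitDisk_monomial, hradial, hangular, Finset.sum_mul]
  refine Finset.sum_congr rfl fun l _ => ?_
  rw [Finset.mul_sum, Finset.mul_sum]
  refine Finset.sum_congr rfl fun m _ => ?_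
  ring

theorem disk_quadrature_exact_general
    (q : ℕ) (r ω : Fin (q + 1) → ℝ)
    (hquad : ∀ p : Polynomial ℝ, p.natDegree ≤ 2 * q + 1 →
      ∫ x in (0 : ℝ)..1, p.eval x = ∑ l : Fin (q + 1), ω l * p.eval (r l)) :
    ∀ g : MvPolynomial (Fin 2) ℝ, g.totalDegree ≤ 2 * q →
      ∫ p in {p : ℝ × ℝ | p.1 ^ 2 + p.2 ^ 2 < 1},
          MvPolynomial.eval ![p.1, p.2] g
        = ∑ l : Fin (q + 1), ∑ m : Fin (2 * q + 1),
            MvPolynomial.eval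
              ![r l * Real.cos (2 * π * m / (2 * q + 1)),
                r l * Real.sin (2 * π * m / (2 * q + 1))] g
              * ω l * (2 * π / (2 * q + 1)) * r l := by
  intro g hg
  have hdeg (d) (hd : d ∈ g.support) : d 0 + d 1 ≤ 2 * q := by
    simpa only [Finsupp.sum_fintype, Fin.sum_univ_two, implies_true] using
      (MvPolynomial.le_totalDegree hd).trans hg
  rw [setIntegral_unitDisk_eval]
  simp only [MvPolynomial.eval_fin_two_eq_sum, Finset.sum_mul]
  rw [Finset.sum_congr rfl fun d hd =>
    by rw [setIntegral_unitDisk_monomial_eq_productRule q r ω hquad (hdeg d hd)]]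
  simp only [Finset.mul_sum]
  rw [Finset.sum_comm]
  refine Finset.sum_congr rfl fun l _ => ?_
  rw [Finset.sum_comm]
  refine Finset.sum_congr rfl fun m _ => Finset.sum_congr rfl fun d _ => ?_
  ring

/-- If `r_0,…,r_q ∈ [0,1]` and `ω_0,…,ω_q` are nodes and weights of a
quadrature rule exact on `[0,1]` for univariate polynomials of degree `≤ 2q+1`, then the
product rule combining it (in the radial variable) with the `(2q+1)`-point trapezoidal
rule (in the azimuthal variable) integrates exactly every bivariate polynomial of total
degree `≤ 2q` over the unit disk `B²`. -/
theorem disk_quadrature_exact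
    (q : ℕ) (r ω : Fin (q + 1) → ℝ)
    (hr : ∀ l, r l ∈ Set.Icc (0 : ℝ) 1)
    (hquad : ∀ p : Polynomial ℝ, p.natDegree ≤ 2 * q + 1 →
      ∫ x in (0 : ℝ)..1, p.eval x = ∑ l : Fin (q + 1), ω l * p.eval (r l)) :
    ∀ g : MvPolynomial (Fin 2) ℝ, g.totalDegree ≤ 2 * q →
      ∫ p in {p : ℝ × ℝ | p.1 ^ 2 + p.2 ^ 2 < 1},
          MvPolynomial.eval ![p.1, p.2] g
        = ∑ l : Fin (q + 1), ∑ m : Fin (2 * q + 1),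
            MvPolynomial.eval
              ![r l * Real.cos (2 * π * m / (2 * q + 1)),
                r l * Real.sin (2 * π * m / (2 * q + 1))] g
              * ω l * (2 * π / (2 * q + 1)) * r l :=
  disk_quadrature_exact_general q r ω hquad
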